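/- arXiv:1212.1583 — 3 statements merged into one kernel-verified Lean document; each statement's English description precedes it below -/
import Mathlib

section
/- Let (W_α(u))_{u≥0} be an inverse α-stable subordinator with 0 < α < 1, normalized so that E W_α(u) = u^α / (Γ(1−α)Γ(1+α)). For 0 < β ≤ α < 1 and u > 0, the fractionally integrated inverse stable subordinator Y_{α,β}(u) = ∫_{[0,u]} (u−y)^{−β} dW_α(y) (pathwise Lebesgue–Stieltjes integral) has finite expectation: E Y_{α,β}(u) = c_α u^{α−β} (1 + β ∫₀¹ (1 − x^α)(1−x)^{−β−1} dx) < ∞, where c_α = 1/(Γ(1−α)Γ(1+α)). In particular Y_{α,β}(u) < ∞ almost surely. -/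
/-!
Layer cake, path by path: the set `{y ≤ u | t < (u - y) ^ (-β)}` is the interval
`(u - t ^ (-1/β), u)`, so `∫_{[0,u]} (u - y) ^ (-β) dW(y) = ∫_0^∞ (W(u-) - W(u - t ^ (-1/β))) dt`.
Here `[0, u]` may be replaced by `(-∞, u]` because the path vanishes on `(-∞, 0]`, and the left
limit appears because `0 ^ (-β) = 0` in Lean, so the jump of `W` at `u` does not contribute.
Right-continuous paths make the integrand jointly measurable, so Tonelli lets us take expectations
inside; there `E W(s) = c s^α` and, by monotone convergence, `E W(u-) = c u^α`. The remaining
deterministic integral is `c u^α u^(-β)` from `t ≤ u^(-β)`, plus the part `t > u^(-β)`, which the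
substitution `t = (u (1 - x))^(-β)` turns into `c β u^(α-β) ∫₀¹ (1 - x^α) (1 - x)^(-β-1) dx`.
-/

open MeasureTheory Filter Real Set Topology
open scoped ENNReal

lemma integrableOn_one_sub_rpow_mul_one_sub_rpow {α β : ℝ} (hα : 0 ≤ α) (hα1 : α ≤ 1)
    (hβ1 : β < 1) :
    IntegrableOn (fun x : ℝ => (1 - x ^ α) * (1 - x) ^ (-β - 1)) (Ioo 0 1) := by
  have hdom : IntegrableOn (fun x : ℝ => (1 - x) ^ (-β)) (Ioo 0 1) := by
    rw [← intervalIntegrable_iff_integrableOn_Ioo_of_le zero_le_one]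
    simpa using ((intervalIntegral.intervalIntegrable_rpow' (a := 0) (b := 1) (r := -β)
      (by linarith)).comp_sub_left 1).symm
  refine hdom.mono' (by fun_prop)
    ((ae_restrict_mem measurableSet_Ioo).mono fun x ⟨hx0, hx1⟩ => ?_)
  have h1x : 0 < 1 - x := by linarith
  rw [Real.norm_of_nonneg (mul_nonneg (sub_nonneg.2 (rpow_le_one hx0.le hx1.le hα))
    (rpow_nonneg h1x.le _))]
  calc (1 - x ^ α) * (1 - x) ^ (-β - 1)
      ≤ (1 - x) ^ (1 : ℝ) * (1 - x) ^ (-β - 1) := by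
        rw [rpow_one]
        gcongr
        simpa using rpow_le_rpow_of_exponent_ge hx0 hx1.le hα1
    _ = (1 - x) ^ (-β) := by rw [← rpow_add h1x]; ring_nf

section
variable {α β c u : ℝ}

lemma lintegral_Ioc_sub_ofReal_max_rpow (hα : 0 < α) (hβ : 0 < β) (hu : 0 < u) :
    ∫⁻ t in Ioc 0 (u ^ (-β)),
        ENNReal.ofReal (c * u ^ α) - ENNReal.ofReal (c * max (u - t ^ (-β)⁻¹) 0 ^ α)
      = ENNReal.ofReal (c * u ^ α) * ENNReal.ofReal (u ^ (-β)) := by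
  have hβ' : -β < 0 := neg_neg_iff_pos.2 hβ
  have hconst : ∀ t ∈ Ioc 0 (u ^ (-β)), ENNReal.ofReal (c * u ^ α)
      - ENNReal.ofReal (c * max (u - t ^ (-β)⁻¹) 0 ^ α) = ENNReal.ofReal (c * u ^ α) := by
    rintro t ⟨ht0, htu⟩
    have : u ≤ t ^ (-β)⁻¹ := (le_rpow_inv_iff_of_neg hu ht0 hβ').2 htu
    rw [max_eq_right (by linarith), zero_rpow hα.ne', mul_zero, ENNReal.ofReal_zero, tsub_zero]
  rw [setLIntegral_congr_fun measurableSet_Ioc hconst, setLIntegral_const, volume_Ioc, sub_zero]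

lemma image_rpow_neg_mul_one_sub_Ioo (hβ : 0 < β) (hu : 0 < u) :
    (fun x : ℝ => (u * (1 - x)) ^ (-β)) '' Ioo 0 1 = Ioi (u ^ (-β)) := by
  have hβ' : -β < 0 := neg_neg_iff_pos.2 hβ
  ext t
  constructor
  · rintro ⟨x, ⟨hx0, hx1⟩, rfl⟩
    exact rpow_lt_rpow_of_neg (by nlinarith) (by nlinarith) hβ'
  · intro (ht : u ^ (-β) < t)
    have ht0 : 0 < t := (rpow_pos_of_pos hu _).trans ht
    have hs0 : 0 < t ^ (-β)⁻¹ := rpow_pos_of_pos ht0 _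
    have hsu : t ^ (-β)⁻¹ < u := (rpow_inv_lt_iff_of_neg ht0 hu hβ').2 ht
    refine ⟨1 - t ^ (-β)⁻¹ / u, ⟨?_, ?_⟩, ?_⟩
    · rw [sub_pos, div_lt_one hu]; exact hsu
    · have : 0 < t ^ (-β)⁻¹ / u := by positivity
      linarith
    · beta_reduce
      rw [sub_sub_cancel, mul_div_cancel₀ _ hu.ne', rpow_inv_rpow ht0.le hβ'.ne]

lemma lintegral_Ioi_sub_ofReal_max_rpow (hα : 0 < α) (hβ : 0 < β) (hu : 0 < u) (hc : 0 ≤ c) :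
    ∫⁻ t in Ioi (u ^ (-β)),
        ENNReal.ofReal (c * u ^ α) - ENNReal.ofReal (c * max (u - t ^ (-β)⁻¹) 0 ^ α)
      = ENNReal.ofReal (c * β * u ^ (α - β)) *
          ∫⁻ x in Ioo 0 1, ENNReal.ofReal ((1 - x ^ α) * (1 - x) ^ (-β - 1)) := by
  have hβ' : -β < 0 := neg_neg_iff_pos.2 hβ
  have hderiv : ∀ x ∈ Ioo (0 : ℝ) 1, HasDerivWithinAt (fun x : ℝ => (u * (1 - x)) ^ (-β))
      (-u * -β * (u * (1 - x)) ^ (-β - 1)) (Ioo 0 1) x := by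
    rintro x ⟨hx0, hx1⟩
    have hlin : HasDerivAt (fun x : ℝ => u * (1 - x)) (-u) x := by
      simpa using ((hasDerivAt_id x).const_sub 1).const_mul u
    exact (hlin.rpow_const (Or.inl (by nlinarith))).hasDerivWithinAt
  have hinj : InjOn (fun x : ℝ => (u * (1 - x)) ^ (-β)) (Ioo 0 1) := by
    refine StrictMonoOn.injOn fun x ⟨hx0, hx1⟩ y ⟨hy0, hy1⟩ hxy => ?_
    exact rpow_lt_rpow_of_neg (by nlinarith) (by nlinarith) hβ'
  rw [← image_rpow_neg_mul_one_sub_Ioo hβ hu,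
    lintegral_image_eq_lintegral_abs_deriv_mul measurableSet_Ioo hderiv hinj,
    ← lintegral_const_mul _ (by fun_prop)]
  refine setLIntegral_congr_fun measurableSet_Ioo fun x ⟨hx0, hx1⟩ => ?_
  have h1x : 0 < 1 - x := by linarith
  have hxα : x ^ α ≤ 1 := rpow_le_one hx0.le hx1.le hα.le
  rw [rpow_rpow_inv (by positivity) hβ'.ne, show u - u * (1 - x) = u * x by ring,
    max_eq_left (by positivity), mul_rpow hu.le hx0.le,
    ← ENNReal.ofReal_sub _ (by positivity), neg_mul_neg, abs_of_nonneg (by positivity),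
    ← ENNReal.ofReal_mul (by positivity), ← ENNReal.ofReal_mul (by positivity)]
  congr 1
  rw [mul_rpow hu.le h1x.le, sub_eq_add_neg α β, rpow_add hu, rpow_sub_one hu.ne']
  field_simp

lemma lintegral_Ioi_zero_sub_ofReal_max_rpow (hα : 0 < α) (hα1 : α ≤ 1) (hβ : 0 < β)
    (hβ1 : β < 1) (hu : 0 < u) (hc : 0 ≤ c) :
    ∫⁻ t in Ioi 0,
        ENNReal.ofReal (c * u ^ α) - ENNReal.ofReal (c * max (u - t ^ (-β)⁻¹) 0 ^ α)
      = ENNReal.ofReal (c * u ^ (α - β) *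
          (1 + β * ∫ x in (0 : ℝ)..1, (1 - x ^ α) * (1 - x) ^ (-β - 1))) := by
  have hk_nonneg : ∀ x ∈ Icc (0 : ℝ) 1, 0 ≤ (1 - x ^ α) * (1 - x) ^ (-β - 1) := fun x hx =>
    mul_nonneg (sub_nonneg.2 (rpow_le_one hx.1 hx.2 hα.le)) (rpow_nonneg (sub_nonneg.2 hx.2) _)
  have hJ : ∫⁻ x in Ioo 0 1, ENNReal.ofReal ((1 - x ^ α) * (1 - x) ^ (-β - 1))
      = ENNReal.ofReal (∫ x in (0 : ℝ)..1, (1 - x ^ α) * (1 - x) ^ (-β - 1)) := by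
    rw [intervalIntegral.integral_of_le zero_le_one, integral_Ioc_eq_integral_Ioo,
      ofReal_integral_eq_lintegral_ofReal
        (integrableOn_one_sub_rpow_mul_one_sub_rpow hα.le hα1 hβ1)
        ((ae_restrict_mem measurableSet_Ioo).mono fun x hx =>
          hk_nonneg x (Ioo_subset_Icc_self hx))]
  have hJ_nonneg : 0 ≤ ∫ x in (0 : ℝ)..1, (1 - x ^ α) * (1 - x) ^ (-β - 1) :=
    intervalIntegral.integral_nonneg zero_le_one hk_nonneg
  rw [← Ioc_union_Ioi_eq_Ioi (rpow_pos_of_pos hu (-β)).le,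
    lintegral_union measurableSet_Ioi Ioc_disjoint_Ioi_same,
    lintegral_Ioc_sub_ofReal_max_rpow hα hβ hu, lintegral_Ioi_sub_ofReal_max_rpow hα hβ hu hc, hJ,
    ← ENNReal.ofReal_mul (by positivity), ← ENNReal.ofReal_mul (by positivity),
    ← ENNReal.ofReal_add (by positivity) (by positivity), sub_eq_add_neg, rpow_add hu]
  ring_nf

end

lemma Monotone.nonneg_of_eq_zero_of_nonpos {f : ℝ → ℝ} (hf : Monotone f)
    (hf0 : ∀ t ≤ 0, f t = 0) (t : ℝ) : 0 ≤ f t := by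
  rcases le_total t 0 with ht | ht
  · exact (hf0 t ht).ge
  · exact (hf0 0 le_rfl).ge.trans (hf ht)

lemma Monotone.ofReal_leftLim_eq_iSup {f : ℝ → ℝ} (hf : Monotone f) {u : ℝ} {s : ℕ → ℝ}
    (hs : Monotone s) (hlim : Tendsto s atTop (𝓝[<] u)) :
    ENNReal.ofReal (Function.leftLim f u) = ⨆ n, ENNReal.ofReal (f (s n)) :=
  tendsto_nhds_unique
    ((ENNReal.continuous_ofReal.tendsto _).comp ((hf.tendsto_leftLim u).comp hlim))
    (tendsto_atTop_iSup fun _ _ hmn => ENNReal.ofReal_le_ofReal (hf (hs hmn)))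

namespace StieltjesFunction

variable (F : StieltjesFunction ℝ) {β u t : ℝ}

lemma measure_Iic_zero_of_eq_zero_of_nonpos (hF : ∀ t ≤ 0, F t = 0) :
    F.measure (Iic 0) = 0 := by
  have hlim : Tendsto F atBot (𝓝 0) :=
    tendsto_const_nhds.congr' ((eventually_le_atBot 0).mono fun t ht => (hF t ht).symm)
  rw [F.measure_Iic hlim, hF 0 le_rfl, sub_zero, ENNReal.ofReal_zero]

lemma restrict_Icc_zero_eq_restrict_Iic (hF : ∀ t ≤ 0, F t = 0) :
    F.measure.restrict (Icc 0 u) = F.measure.restrict (Iic u) := by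
  refine Measure.restrict_congr_set
    (ae_eq_set.2 ⟨by rw [sdiff_eq_empty.2 Icc_subset_Iic_self, measure_empty], ?_⟩)
  refine measure_mono_null (fun y hy => ?_) (F.measure_Iic_zero_of_eq_zero_of_nonpos hF)
  simp only [Set.mem_sdiff, mem_Iic, mem_Icc, not_and, not_le] at hy
  exact (lt_of_not_ge fun h => (hy.2 h).not_ge hy.1).le

lemma measure_restrict_Icc_setOf_lt_rpow_neg_sub (hF : ∀ t ≤ 0, F t = 0) (hβ : 0 < β)
    (ht : 0 < t) :
    F.measure.restrict (Icc 0 u) {y | t < (u - y) ^ (-β)}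
      = ENNReal.ofReal (Function.leftLim F u) - ENNReal.ofReal (F (u - t ^ (-β)⁻¹)) := by
  have hβ' : -β < 0 := neg_neg_iff_pos.2 hβ
  have hset : {y | t < (u - y) ^ (-β)} ∩ Iic u = Ioo (u - t ^ (-β)⁻¹) u := by
    ext y
    simp only [mem_inter_iff, mem_ofPred_eq, mem_Iic, mem_Ioo]
    constructor
    · rintro ⟨hty, hyu⟩
      obtain rfl | hyu := hyu.eq_or_lt
      · rw [sub_self, zero_rpow hβ'.ne] at hty
        exact absurd hty ht.not_gt
      · have := (lt_rpow_inv_iff_of_neg (sub_pos.2 hyu) ht hβ').2 hty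
        constructor <;> linarith
    · rintro ⟨hy, hyu⟩
      exact ⟨(lt_rpow_inv_iff_of_neg (sub_pos.2 hyu) ht hβ').1 (by linarith), hyu.le⟩
  rw [F.restrict_Icc_zero_eq_restrict_Iic hF, Measure.restrict_apply' measurableSet_Iic, hset,
    measure_Ioo, ENNReal.ofReal_sub _ (F.mono.nonneg_of_eq_zero_of_nonpos hF _)]

lemma lintegral_Icc_rpow_neg_sub (hF : ∀ t ≤ 0, F t = 0) (hβ : 0 < β) :
    ∫⁻ y in Icc 0 u, ENNReal.ofReal ((u - y) ^ (-β)) ∂F.measure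
      = ∫⁻ t in Ioi 0,
          ENNReal.ofReal (Function.leftLim F u) - ENNReal.ofReal (F (u - t ^ (-β)⁻¹)) := by
  have hnonneg : 0 ≤ᵐ[F.measure.restrict (Icc 0 u)] fun y => (u - y) ^ (-β) :=
    (ae_restrict_mem measurableSet_Icc).mono fun y hy => rpow_nonneg (sub_nonneg.2 hy.2) _
  rw [lintegral_eq_lintegral_meas_lt _ hnonneg (by fun_prop)]
  exact setLIntegral_congr_fun _root_.measurableSet_Ioi fun t ht =>
    F.measure_restrict_Icc_setOf_lt_rpow_neg_sub hF hβ ht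

end StieltjesFunction

section

variable {Ω : Type*} [MeasurableSpace Ω] {W : ℝ → Ω → ℝ}

lemma measurable_uncurry_of_continuousWithinAt_Ici (hmeas : ∀ t, Measurable (W t))
    (hrc : ∀ ω t, ContinuousWithinAt (W · ω) (Ici t) t) : Measurable (Function.uncurry W) := by
  -- right-continuous paths are limits of paths sampled on the grids `ℤ / (n + 1)`, from the right
  have hd : ∀ (n : ℕ) (t : ℝ), t < (⌊(n + 1) * t⌋ + 1) / (n + 1) ∧
      (⌊(n + 1) * t⌋ + 1) / (n + 1) ≤ t + 1 / (n + 1 : ℝ) := fun n t => by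
    have hn : (0 : ℝ) < n + 1 := by positivity
    constructor
    · rw [lt_div_iff₀ hn]
      linarith [Int.lt_floor_add_one ((n + 1) * t)]
    · calc ((⌊(n + 1) * t⌋ + 1) / (n + 1) : ℝ) ≤ ((n + 1) * t + 1) / (n + 1) := by
            gcongr; exact Int.floor_le _
        _ = t + 1 / (n + 1) := by field_simp
  have hd_lim : ∀ t : ℝ,
      Tendsto (fun n : ℕ => (⌊(n + 1) * t⌋ + 1) / (n + 1 : ℝ)) atTop (𝓝[≥] t) :=
    fun t => tendsto_nhdsWithin_iff.2 ⟨tendsto_of_tendsto_of_tendsto_of_le_of_le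
      tendsto_const_nhds
      (by simpa using tendsto_const_nhds.add (tendsto_one_div_add_atTop_nhds_zero_nat (𝕜 := ℝ)))
      (fun n => (hd n t).1.le) (fun n => (hd n t).2), .of_forall fun n => (hd n t).1.le⟩
  refine measurable_of_tendsto_metrizable
    (f := fun (n : ℕ) (p : ℝ × Ω) => W ((⌊(n + 1) * p.1⌋ + 1) / (n + 1)) p.2) (fun n => ?_)
    (tendsto_pi_nhds.2 fun p => (hrc p.2 p.1).tendsto.comp (hd_lim p.1))
  have hgrid : Measurable fun q : ℤ × Ω => W ((q.1 + 1) / (n + 1)) q.2 :=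
    measurable_from_prod_countable_right fun k => hmeas ((k + 1) / (n + 1))
  exact hgrid.comp ((measurable_fst.const_mul _).floor.prodMk measurable_snd)

lemma measurable_ofReal_leftLim (hmeas : ∀ t, Measurable (W t)) (hmono : ∀ ω, Monotone (W · ω))
    (u : ℝ) : Measurable fun ω => ENNReal.ofReal (Function.leftLim (W · ω) u) := by
  obtain ⟨s, hs, -, hlim⟩ := exists_seq_strictMono_tendsto_nhdsWithin u
  simp_rw [(hmono _).ofReal_leftLim_eq_iSup hs.monotone hlim]
  exact .iSup fun n => (hmeas _).ennreal_ofReal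

lemma lintegral_ofReal_leftLim (P : Measure Ω) (hmeas : ∀ t, Measurable (W t))
    (hmono : ∀ ω, Monotone (W · ω)) {m : ℝ → ℝ≥0∞}
    (hm : ∀ t, ∫⁻ ω, ENNReal.ofReal (W t ω) ∂P = m t) {u : ℝ}
    (hcont : ContinuousWithinAt m (Iio u) u) :
    ∫⁻ ω, ENNReal.ofReal (Function.leftLim (W · ω) u) ∂P = m u := by
  obtain ⟨s, hs, -, hlim⟩ := exists_seq_strictMono_tendsto_nhdsWithin u
  simp_rw [(hmono _).ofReal_leftLim_eq_iSup hs.monotone hlim]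
  rw [lintegral_iSup (fun n => (hmeas _).ennreal_ofReal)
    fun _ _ hij ω => ENNReal.ofReal_le_ofReal (hmono ω (hs.monotone hij))]
  refine tendsto_nhds_unique (tendsto_atTop_iSup fun _ _ hij => lintegral_mono fun ω =>
    ENNReal.ofReal_le_ofReal (hmono ω (hs.monotone hij))) ?_
  simp only [hm]
  exact hcont.tendsto.comp hlim

lemma lintegral_ofReal_eq_mul_max_rpow (P : Measure Ω) (hmono : ∀ ω, Monotone (W · ω))
    (hzero : ∀ ω, ∀ t ≤ (0 : ℝ), W t ω = 0) {α c : ℝ} (hα : 0 < α) (hc : 0 < c)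
    (hE : ∀ t ≥ (0 : ℝ), ∫ ω, W t ω ∂P = c * t ^ α) (t : ℝ) :
    ∫⁻ ω, ENNReal.ofReal (W t ω) ∂P = ENNReal.ofReal (c * max t 0 ^ α) := by
  rcases le_or_gt t 0 with ht | ht
  · simp [hzero _ t ht, max_eq_right ht, zero_rpow hα.ne']
  have hint : Integrable (W t) P := .of_integral_ne_zero (by rw [hE t ht.le]; positivity)
  rw [← ofReal_integral_eq_lintegral_ofReal hint
    (ae_of_all _ fun ω => (hmono ω).nonneg_of_eq_zero_of_nonpos (hzero ω) t),
    hE t ht.le, max_eq_left ht.le]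

end

/-- For an inverse `α`-stable subordinator `W` (increasing right-continuous
paths started at `0`, with `E W(t) = t^α/(Γ(1−α)Γ(1+α))`), and `0 < β ≤ α < 1`, `u > 0`,
the fractionally integrated inverse stable subordinator
`Y(u) = ∫_{[0,u]} (u−y)^{−β} dW(y)` (pathwise Lebesgue–Stieltjes integral) satisfies
`E Y(u) = c_α u^{α−β} (1 + β ∫₀¹ (1−x^α)(1−x)^{−β−1} dx) < ∞`,
and in particular `Y(u) < ∞` almost surely. -/
theorem fracIntegrated_inverse_stable_subordinator_mean
    {Ω : Type*} [MeasurableSpace Ω] (P : Measure Ω) [IsProbabilityMeasure P]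
    (α β : ℝ) (hα : 0 < α) (hα1 : α < 1) (hβ : 0 < β) (hβα : β ≤ α)
    (W : ℝ → Ω → ℝ) (hmeas : ∀ t, Measurable (W t))
    (hmono : ∀ ω, Monotone (fun t => W t ω))
    (hrc : ∀ ω x, ContinuousWithinAt (fun t => W t ω) (Set.Ici x) x)
    (hzero : ∀ ω, ∀ t ≤ (0:ℝ), W t ω = 0)
    (hE : ∀ t ≥ (0:ℝ),
      ∫ ω, W t ω ∂P = t ^ α / (Real.Gamma (1 - α) * Real.Gamma (1 + α)))
    (u : ℝ) (hu : 0 < u) :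
    (∫⁻ ω, (∫⁻ y in Set.Icc (0:ℝ) u, ENNReal.ofReal ((u - y) ^ (-β))
        ∂((⟨fun t => W t ω, hmono ω, hrc ω⟩ : StieltjesFunction ℝ).measure)) ∂P)
      = ENNReal.ofReal ((1 / (Real.Gamma (1 - α) * Real.Gamma (1 + α))) * u ^ (α - β) *
          (1 + β * ∫ x in (0:ℝ)..1, (1 - x ^ α) * (1 - x) ^ (-β - 1))) ∧
    ∀ᵐ ω ∂P, (∫⁻ y in Set.Icc (0:ℝ) u, ENNReal.ofReal ((u - y) ^ (-β))
        ∂((⟨fun t => W t ω, hmono ω, hrc ω⟩ : StieltjesFunction ℝ).measure)) < ⊤ := by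
  set c := 1 / (Gamma (1 - α) * Gamma (1 + α))
  have hc : 0 < c := by
    have := Gamma_pos_of_pos (by linarith : 0 < 1 - α)
    have := Gamma_pos_of_pos (by linarith : 0 < 1 + α)
    positivity
  have hmean := lintegral_ofReal_eq_mul_max_rpow P hmono hzero hα hc
    fun t ht => by rw [hE t ht, one_div_mul_eq_div]
  have hmean_cont : Continuous fun t : ℝ => ENNReal.ofReal (c * max t 0 ^ α) :=
    ENNReal.continuous_ofReal.comp (continuous_const.mul
      ((continuous_id.max continuous_const).rpow_const fun _ => Or.inr hα.le))
  set K : Ω → ℝ → ℝ≥0∞ := fun ω t =>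
    ENNReal.ofReal (Function.leftLim (W · ω) u) - ENNReal.ofReal (W (u - t ^ (-β)⁻¹) ω)
  have hY : ∀ ω, ∫⁻ y in Icc 0 u, ENNReal.ofReal ((u - y) ^ (-β))
      ∂(⟨fun t => W t ω, hmono ω, hrc ω⟩ : StieltjesFunction ℝ).measure = ∫⁻ t in Ioi 0, K ω t :=
    fun ω => StieltjesFunction.lintegral_Icc_rpow_neg_sub _ (hzero ω) hβ
  have hK : Measurable (Function.uncurry K) :=
    ((measurable_ofReal_leftLim hmeas hmono u).comp measurable_fst).sub
      ((measurable_uncurry_of_continuousWithinAt_Ici hmeas hrc).comp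
        ((measurable_const.sub (measurable_snd.pow_const _)).prodMk measurable_fst)).ennreal_ofReal
  have hEK : ∀ t ∈ Ioi (0 : ℝ), ∫⁻ ω, K ω t ∂P
      = ENNReal.ofReal (c * u ^ α) - ENNReal.ofReal (c * max (u - t ^ (-β)⁻¹) 0 ^ α) := by
    intro t (ht : 0 < t)
    have hlt : u - t ^ (-β)⁻¹ < u := sub_lt_self u (rpow_pos_of_pos ht _)
    rw [lintegral_sub (hmeas _).ennreal_ofReal (by rw [hmean]; exact ENNReal.ofReal_ne_top)
      (ae_of_all _ fun ω => ENNReal.ofReal_le_ofReal ((hmono ω).le_leftLim hlt)),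
      lintegral_ofReal_leftLim P hmeas hmono hmean hmean_cont.continuousWithinAt, hmean,
      max_eq_left hu.le]
  have hEY : ∫⁻ ω, (∫⁻ t in Ioi 0, K ω t) ∂P = ENNReal.ofReal (c * u ^ (α - β) *
      (1 + β * ∫ x in (0 : ℝ)..1, (1 - x ^ α) * (1 - x) ^ (-β - 1))) := by
    rw [lintegral_lintegral_swap hK.aemeasurable, setLIntegral_congr_fun measurableSet_Ioi hEK,
      lintegral_Ioi_zero_sub_ofReal_max_rpow hα hα1.le hβ (hβα.trans_lt hα1) hu hc.le]
  simp_rw [hY]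
  exact ⟨hEY, ae_lt_top hK.lintegral_prod_right (by rw [hEY]; exact ENNReal.ofReal_ne_top)⟩
end

section
/- Let f₁, f₂ : [0,∞) → [0,∞) be bounded decreasing functions with f₁ ≥ f₂ pointwise and ∫₀^{t₀}(f₁(y) − f₂(y)) dy > 0 for some t₀ > 0. Let N be the renewal counting process of a zero-delayed random walk with positive i.i.d. increments. Then sup_{t ≥ t₀} [E ∫_{[0,t]} (f₁(t−y) − f₂(t−y)) dN(y)] / [∫₀^t (f₁(y) − f₂(y)) dy] < ∞. -/
/-!
Cut `[0, t]` into the unit slices `t - s ∈ [j, j + 1)`. On the `j`-th slice the integrand is at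
most `f₁ j - f₂ (j + 1)`, and the expected number of renewals in any interval of length one is
bounded uniformly: split at the first passage above the left end point; afterwards the walk must
advance by less than one, which by independence of past and future and the Chernoff bound
`1{x < 1} ≤ e^{1 - x}` has probability at most `e φ ^ n` after `n` steps, where `φ = E e^{-ξ₀} < 1`.
Since `f₁, f₂` are antitone, `∑_{j ≤ t} (f₁ j - f₂ (j + 1))` exceeds `∫₀ᵗ (f₁ - f₂)` by at most
`f₁ 0 + f₂ 0`, and that integral is at least its positive value at `t₀`.
-/

open MeasureTheory ProbabilityTheory Real
open scoped ENNReal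

open Finset in
theorem ENNReal.tsum_mul_tsum_eq_tsum_sum_range (f g : ℕ → ℝ≥0∞) :
    (∑' n, f n) * ∑' n, g n = ∑' n, ∑ k ∈ range (n + 1), f k * g (n - k) := by
  simp_rw [← Nat.sum_antidiagonal_eq_sum_range_succ fun k l => f k * g l]
  calc (∑' n, f n) * ∑' n, g n = ∑' p : ℕ × ℕ, f p.1 * g p.2 := by
        rw [ENNReal.tsum_prod', ← ENNReal.tsum_mul_right]
        simp_rw [ENNReal.tsum_mul_left]
    _ = ∑' x : (Σ n : ℕ, antidiagonal n), f x.2.1.1 * g x.2.1.2 :=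
        (HasAntidiagonal.sigmaAntidiagonalEquivProd.tsum_eq _).symm
    _ = _ := by
        rw [ENNReal.tsum_sigma']
        simp_rw [tsum_subtype (antidiagonal _) fun p => f p.1 * g p.2]

section FirstPassage

variable {Ω : Type*} (ξ : ℕ → Ω → ℝ)

def firstPassage (a : ℝ) (m : ℕ) : Set Ω :=
  {ω | (∀ j < m, ∑ i ∈ Finset.range j, ξ i ω ≤ a) ∧ a < ∑ i ∈ Finset.range m, ξ i ω}

lemma measurableSet_firstPassage (a : ℝ) (m : ℕ) :
    MeasurableSet[⨆ i ∈ Set.Iio m, MeasurableSpace.comap (ξ i) inferInstance]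
      (firstPassage ξ a m) := by
  have hsum : ∀ j ≤ m, Measurable[⨆ i ∈ Set.Iio m, MeasurableSpace.comap (ξ i) inferInstance]
      fun ω => ∑ i ∈ Finset.range j, ξ i ω := fun j hj =>
    Finset.measurable_sum _ fun i hi => (comap_measurable (ξ i)).mono
      (le_iSup₂ (f := fun i _ => MeasurableSpace.comap (ξ i) inferInstance) i
        (Set.mem_Iio.2 ((Finset.mem_range.1 hi).trans_le hj))) le_rfl
  have hpre : firstPassage ξ a m = (⋂ j ∈ Set.Iio m, {ω | ∑ i ∈ Finset.range j, ξ i ω ≤ a}) ∩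
      {ω | a < ∑ i ∈ Finset.range m, ξ i ω} := by
    ext; simp [firstPassage]
  rw [hpre]
  exact (MeasurableSet.biInter (Set.to_countable _) fun j hj =>
    measurableSet_le (hsum j (Set.mem_Iio.1 hj).le) measurable_const).inter
      (measurableSet_lt measurable_const (hsum m le_rfl))

lemma pairwise_disjoint_firstPassage (a : ℝ) :
    Pairwise (Function.onFun Disjoint (firstPassage ξ a)) :=
  (pairwise_disjoint_on _).2 fun m _ hmn =>
    Set.disjoint_left.2 fun _ hm hn => (hn.1 m hmn).not_gt hm.2

lemma setOf_sum_range_mem_Ioc_subset (b : ℝ) (k : ℕ) :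
    {ω | ∑ i ∈ Finset.range k, ξ i ω ∈ Set.Ioc (b - 1) b} ⊆
      ⋃ m ∈ Finset.range (k + 1),
        firstPassage ξ (b - 1) m ∩ {ω | ∑ i ∈ Finset.Ico m k, ξ i ω < 1} := by
  intro ω hω
  have hex : ∃ m, b - 1 < ∑ i ∈ Finset.range m, ξ i ω := ⟨k, hω.1⟩
  have hfind : Nat.find hex ≤ k := Nat.find_min' hex hω.1
  refine Set.mem_biUnion (Finset.mem_range.2 (Nat.lt_succ_of_le hfind))
    ⟨⟨fun j hj => not_lt.1 (Nat.find_min hex hj), Nat.find_spec hex⟩, ?_⟩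
  have hpass := Nat.find_spec hex
  rw [Set.mem_ofPred_eq, Finset.sum_Ico_eq_sub _ hfind]
  linarith [hω.2]

end FirstPassage

section Renewal

variable {Ω : Type*} [MeasurableSpace Ω] {P : Measure Ω} {ξ : ℕ → Ω → ℝ}

lemma lintegral_exp_neg_lt_one [IsProbabilityMeasure P] {X : Ω → ℝ}
    (hpos : ∀ᵐ ω ∂P, 0 < X ω) : ∫⁻ ω, ENNReal.ofReal (exp (-X ω)) ∂P < 1 := by
  have hlt : ∀ᵐ ω ∂P, ENNReal.ofReal (exp (-X ω)) < 1 := by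
    filter_upwards [hpos] with ω hω
    simpa using neg_lt_zero.mpr hω
  have hne_top : ∫⁻ ω, ENNReal.ofReal (exp (-X ω)) ∂P ≠ ∞ :=
    ne_top_of_le_ne_top (by simp) (lintegral_mono_ae (hlt.mono fun _ h => h.le))
  simpa using lintegral_strict_mono (IsProbabilityMeasure.ne_zero P) aemeasurable_const hne_top hlt

lemma lintegral_exp_neg_sum (hmeas : ∀ i, Measurable (ξ i)) (hindep : iIndepFun ξ P)
    (hident : ∀ i, P.map (ξ i) = P.map (ξ 0)) (s : Finset ℕ) :
    ∫⁻ ω, ENNReal.ofReal (exp (-∑ i ∈ s, ξ i ω)) ∂P =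
      (∫⁻ ω, ENNReal.ofReal (exp (-ξ 0 ω)) ∂P) ^ s.card := by
  have hE : Measurable fun x : ℝ => ENNReal.ofReal (exp (-x)) := by fun_prop
  have hmarginal : ∀ i, ∫⁻ ω, ENNReal.ofReal (exp (-ξ i ω)) ∂P =
      ∫⁻ ω, ENNReal.ofReal (exp (-ξ 0 ω)) ∂P := fun i => by
    rw [← lintegral_map hE (hmeas i), hident i, lintegral_map hE (hmeas 0)]
  have hprod : ∀ ω, ENNReal.ofReal (exp (-∑ i ∈ s, ξ i ω)) =
      ∏ i ∈ s, ENNReal.ofReal (exp (-ξ i ω)) := fun ω => by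
    rw [← Finset.sum_neg_distrib, exp_sum, ENNReal.ofReal_prod_of_nonneg fun i _ => (exp_pos _).le]
  simp_rw [hprod]
  rw [lintegral_prod_eq_prod_lintegral_of_indepFun s (fun i ω => ENNReal.ofReal (exp (-ξ i ω)))
    (hindep.comp (fun _ x => ENNReal.ofReal (exp (-x))) fun _ => hE) fun i => hE.comp (hmeas i)]
  simp [hmarginal]

lemma measure_inter_sum_Ico_lt_one_le (hmeas : ∀ i, Measurable (ξ i)) (hindep : iIndepFun ξ P)
    (hident : ∀ i, P.map (ξ i) = P.map (ξ 0)) {m : ℕ} {A : Set Ω}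
    (hA : MeasurableSet[⨆ i ∈ Set.Iio m, MeasurableSpace.comap (ξ i) inferInstance] A) (k : ℕ) :
    P (A ∩ {ω | ∑ i ∈ Finset.Ico m k, ξ i ω < 1}) ≤
      ENNReal.ofReal (exp 1) * (P A * (∫⁻ ω, ENNReal.ofReal (exp (-ξ 0 ω)) ∂P) ^ (k - m)) := by
  set Y : Ω → ℝ≥0∞ := fun ω => ENNReal.ofReal (exp (-∑ i ∈ Finset.Ico m k, ξ i ω))
  have hle : ∀ i, MeasurableSpace.comap (ξ i) inferInstance ≤ ‹MeasurableSpace Ω› :=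
    fun i => (hmeas i).comap_le
  have hpast_future : Indep (⨆ i ∈ Set.Iio m, MeasurableSpace.comap (ξ i) inferInstance)
      (⨆ i ∈ Set.Ici m, MeasurableSpace.comap (ξ i) inferInstance) P :=
    indep_iSup_of_disjoint hle ((iIndepFun_iff_iIndep _ _ _).1 hindep) (Set.Iio_disjoint_Ici le_rfl)
  have hY : Measurable[⨆ i ∈ Set.Ici m, MeasurableSpace.comap (ξ i) inferInstance] Y := by
    refine (Finset.measurable_sum _ fun i hi => ?_).neg.exp.ennreal_ofReal
    exact (comap_measurable (ξ i)).mono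
      (le_iSup₂ (f := fun i _ => MeasurableSpace.comap (ξ i) inferInstance) i
        (Finset.mem_Ico.1 hi).1) le_rfl
  have hA' : MeasurableSet A := iSup₂_le (fun i _ => hle i) A hA
  have hbound : ∀ ω, (A ∩ {ω | ∑ i ∈ Finset.Ico m k, ξ i ω < 1}).indicator 1 ω ≤
      ENNReal.ofReal (exp 1) * (A.indicator 1 ω * Y ω) := by
    intro ω
    by_cases hω : ω ∈ A ∩ {ω | ∑ i ∈ Finset.Ico m k, ξ i ω < 1}
    · rw [Set.indicator_of_mem hω, Set.indicator_of_mem hω.1, Pi.one_apply, one_mul,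
        ← ENNReal.ofReal_mul (exp_pos 1).le, ← exp_add, ← ENNReal.ofReal_one]
      exact ENNReal.ofReal_le_ofReal (one_le_exp (by linarith [hω.2.out]))
    · simp [Set.indicator_of_notMem hω]
  calc P (A ∩ {ω | ∑ i ∈ Finset.Ico m k, ξ i ω < 1})
      = ∫⁻ ω, (A ∩ {ω | ∑ i ∈ Finset.Ico m k, ξ i ω < 1}).indicator 1 ω ∂P :=
        (lintegral_indicator_one (hA'.inter (measurableSet_lt
          (Finset.measurable_sum _ fun i _ => hmeas i) measurable_const))).symm
    _ ≤ ∫⁻ ω, ENNReal.ofReal (exp 1) * (A.indicator 1 ω * Y ω) ∂P := lintegral_mono hbound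
    _ = ENNReal.ofReal (exp 1) * (P A * (∫⁻ ω, ENNReal.ofReal (exp (-ξ 0 ω)) ∂P) ^ (k - m)) := by
      rw [lintegral_const_mul' _ _ ENNReal.ofReal_ne_top,
        lintegral_mul_eq_lintegral_mul_lintegral_of_independent_measurableSpace
          (iSup₂_le fun i _ => hle i) (iSup₂_le fun i _ => hle i) hpast_future
          (Measurable.indicator (by exact measurable_const) hA) hY,
        lintegral_indicator_one hA', lintegral_exp_neg_sum hmeas hindep hident, Nat.card_Ico]

theorem tsum_measure_sum_range_mem_Ioc_le [IsProbabilityMeasure P]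
    (hmeas : ∀ i, Measurable (ξ i)) (hindep : iIndepFun ξ P)
    (hident : ∀ i, P.map (ξ i) = P.map (ξ 0)) (b : ℝ) :
    ∑' k, P {ω | ∑ i ∈ Finset.range k, ξ i ω ∈ Set.Ioc (b - 1) b} ≤
      ENNReal.ofReal (exp 1) * (1 - ∫⁻ ω, ENNReal.ofReal (exp (-ξ 0 ω)) ∂P)⁻¹ := by
  set φ := ∫⁻ ω, ENNReal.ofReal (exp (-ξ 0 ω)) ∂P
  set A := firstPassage ξ (b - 1)
  have hA : ∀ m, MeasurableSet (A m) := fun m =>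
    iSup₂_le (fun i _ => (hmeas i).comap_le) _ (measurableSet_firstPassage ξ (b - 1) m)
  have hA_sum : ∑' m, P (A m) ≤ 1 := by
    rw [← measure_iUnion (pairwise_disjoint_firstPassage ξ (b - 1)) hA]
    exact prob_le_one
  calc ∑' k, P {ω | ∑ i ∈ Finset.range k, ξ i ω ∈ Set.Ioc (b - 1) b}
      ≤ ∑' k, ∑ m ∈ Finset.range (k + 1), P (A m ∩ {ω | ∑ i ∈ Finset.Ico m k, ξ i ω < 1}) :=
        ENNReal.tsum_le_tsum fun k => (measure_mono (setOf_sum_range_mem_Ioc_subset ξ b k)).trans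
          (measure_biUnion_finset_le _ _)
    _ ≤ ∑' k, ∑ m ∈ Finset.range (k + 1), ENNReal.ofReal (exp 1) * (P (A m) * φ ^ (k - m)) :=
        ENNReal.tsum_le_tsum fun k => Finset.sum_le_sum fun m _ =>
          measure_inter_sum_Ico_lt_one_le hmeas hindep hident
            (measurableSet_firstPassage ξ (b - 1) m) k
    _ = ENNReal.ofReal (exp 1) * ((∑' m, P (A m)) * ∑' n, φ ^ n) := by
      simp_rw [← Finset.mul_sum]
      rw [ENNReal.tsum_mul_left, ENNReal.tsum_mul_tsum_eq_tsum_sum_range]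
    _ ≤ ENNReal.ofReal (exp 1) * (1 - φ)⁻¹ := by
      rw [ENNReal.tsum_geometric]
      gcongr
      exact (mul_le_mul_left hA_sum _).trans_eq (one_mul _)

end Renewal

section Antitone

variable {f₁ f₂ : ℝ → ℝ}

lemma AntitoneOn.intervalIntegrable_of_nonneg {f : ℝ → ℝ} (hf : AntitoneOn f (Set.Ici 0))
    {a b : ℝ} (ha : 0 ≤ a) (hab : a ≤ b) : IntervalIntegrable f volume a b :=
  (hf.mono fun _ hx => ha.trans (Set.uIcc_of_le hab ▸ hx).1).intervalIntegrable

lemma intervalIntegral_sub_le_of_le (h₁ : AntitoneOn f₁ (Set.Ici 0))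
    (h₂ : AntitoneOn f₂ (Set.Ici 0)) (hle : ∀ y ≥ (0:ℝ), f₂ y ≤ f₁ y) {a b : ℝ} (ha : 0 ≤ a)
    (hab : a ≤ b) :
    ∫ y in (0:ℝ)..a, (f₁ y - f₂ y) ≤ ∫ y in (0:ℝ)..b, (f₁ y - f₂ y) :=
  intervalIntegral.integral_mono_interval le_rfl ha hab
    ((ae_restrict_iff' measurableSet_Ioc).2 (ae_of_all _ fun y hy => sub_nonneg.2 (hle y hy.1.le)))
    ((h₁.intervalIntegrable_of_nonneg le_rfl (ha.trans hab)).sub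
      (h₂.intervalIntegrable_of_nonneg le_rfl (ha.trans hab)))

lemma sum_range_sub_le_integral (h₁ : AntitoneOn f₁ (Set.Ici 0))
    (h₂ : AntitoneOn f₂ (Set.Ici 0)) (h₂pos : ∀ y ≥ (0:ℝ), 0 ≤ f₂ y) (n : ℕ) :
    ∑ j ∈ Finset.range (n + 1), (f₁ j - f₂ (j + 1)) ≤
      f₁ 0 + f₂ 0 + ∫ y in (0:ℝ)..n, (f₁ y - f₂ y) := by
  have hf₁ : ∑ j ∈ Finset.range (n + 1), f₁ j ≤ f₁ 0 + ∫ y in (0:ℝ)..n, f₁ y := by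
    rw [Finset.sum_range_succ', add_comm]
    simpa using (h₁.mono fun x hx => hx.1).sum_le_integral (x₀ := 0) (a := n)
  have hf₂ : ∫ y in (0:ℝ)..n, f₂ y ≤ f₂ 0 + ∑ j ∈ Finset.range (n + 1), f₂ (j + 1) := by
    have hint := (h₂.mono fun x hx => hx.1).integral_le_sum (x₀ := 0) (a := n)
    have hshift := Finset.sum_range_succ' (fun i : ℕ => f₂ i) n
    have hlast := Finset.sum_range_succ (fun i : ℕ => f₂ i) n
    have hlast' := Finset.sum_range_succ (fun i : ℕ => f₂ (i + 1)) n
    push_cast at hint hshift hlast hlast'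
    simp only [zero_add] at hint
    linarith [h₂pos n n.cast_nonneg, h₂pos (n + 1) (by positivity)]
  rw [Finset.sum_sub_distrib, intervalIntegral.integral_sub
    (h₁.intervalIntegrable_of_nonneg le_rfl n.cast_nonneg)
    (h₂.intervalIntegrable_of_nonneg le_rfl n.cast_nonneg)]
  linarith

lemma ofReal_sub_le_sum_indicator (h₁ : AntitoneOn f₁ (Set.Ici 0))
    (h₂ : AntitoneOn f₂ (Set.Ici 0)) {s t : ℝ} (hs : 0 ≤ s) (hst : s ≤ t) :
    ENNReal.ofReal (f₁ (t - s) - f₂ (t - s)) ≤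
      ∑ j ∈ Finset.range (⌊t⌋₊ + 1),
        (Set.Ioc (t - j - 1) (t - j)).indicator
          (fun _ => ENNReal.ofReal (f₁ j - f₂ (j + 1))) s := by
  have hu : 0 ≤ t - s := sub_nonneg.2 hst
  set j := ⌊t - s⌋₊
  have hj : (j : ℝ) ≤ t - s := Nat.floor_le hu
  have hj' : t - s < j + 1 := Nat.lt_floor_add_one _
  have hjt : j < ⌊t⌋₊ + 1 := Nat.lt_succ_of_le (Nat.floor_le_floor (by linarith))
  have hmem : s ∈ Set.Ioc (t - j - 1) (t - j) := ⟨by linarith, by linarith⟩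
  have hval : f₁ (t - s) - f₂ (t - s) ≤ f₁ j - f₂ (j + 1) := by
    have e₁ := h₁ (Set.mem_Ici.2 j.cast_nonneg) (Set.mem_Ici.2 hu) hj
    have e₂ := h₂ (Set.mem_Ici.2 hu) (Set.mem_Ici.2 (by positivity)) hj'.le
    linarith
  calc ENNReal.ofReal (f₁ (t - s) - f₂ (t - s)) ≤ ENNReal.ofReal (f₁ j - f₂ (j + 1)) :=
        ENNReal.ofReal_le_ofReal hval
    _ = (Set.Ioc (t - j - 1) (t - j)).indicator
          (fun _ => ENNReal.ofReal (f₁ j - f₂ (j + 1))) s :=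
        (Set.indicator_of_mem hmem (fun _ => ENNReal.ofReal (f₁ j - f₂ (j + 1)))).symm
    _ ≤ _ := Finset.single_le_sum (f := fun j : ℕ => (Set.Ioc (t - j - 1) (t - j)).indicator
          (fun _ => ENNReal.ofReal (f₁ j - f₂ (j + 1))) s) (fun _ _ => zero_le)
          (Finset.mem_range.2 hjt)

lemma sum_ofReal_sub_le_mul_integral (h₁ : AntitoneOn f₁ (Set.Ici 0))
    (h₂ : AntitoneOn f₂ (Set.Ici 0)) (hle : ∀ y ≥ (0:ℝ), f₂ y ≤ f₁ y)
    (h₂pos : ∀ y ≥ (0:ℝ), 0 ≤ f₂ y) {t₀ t : ℝ} (ht₀ : 0 ≤ t₀)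
    (hpos_int : 0 < ∫ y in (0:ℝ)..t₀, (f₁ y - f₂ y)) (ht : t₀ ≤ t) :
    ∑ j ∈ Finset.range (⌊t⌋₊ + 1), ENNReal.ofReal (f₁ j - f₂ (j + 1)) ≤
      ENNReal.ofReal ((f₁ 0 + f₂ 0) / (∫ y in (0:ℝ)..t₀, (f₁ y - f₂ y)) + 1) *
        ENNReal.ofReal (∫ y in (0:ℝ)..t, (f₁ y - f₂ y)) := by
  set c₀ := ∫ y in (0:ℝ)..t₀, (f₁ y - f₂ y)
  set I := ∫ y in (0:ℝ)..t, (f₁ y - f₂ y)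
  have ha : 0 ≤ f₁ 0 + f₂ 0 := add_nonneg ((h₂pos 0 le_rfl).trans (hle 0 le_rfl)) (h₂pos 0 le_rfl)
  have hc₀I : c₀ ≤ I := intervalIntegral_sub_le_of_le h₁ h₂ hle ht₀ ht
  have hfloor :=
    intervalIntegral_sub_le_of_le h₁ h₂ hle (Nat.cast_nonneg _) (Nat.floor_le (ht₀.trans ht))
  have haI : f₁ 0 + f₂ 0 ≤ (f₁ 0 + f₂ 0) / c₀ * I := by
    rw [div_mul_eq_mul_div, le_div_iff₀ hpos_int]
    exact mul_le_mul_of_nonneg_left hc₀I ha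
  have hc : ∀ j : ℕ, 0 ≤ f₁ j - f₂ (j + 1) := fun j => sub_nonneg.2 <|
    (hle _ (by positivity)).trans (h₁ (Set.mem_Ici.2 j.cast_nonneg) (Set.mem_Ici.2 (by positivity))
      (by linarith))
  rw [← ENNReal.ofReal_sum_of_nonneg fun j _ => hc j, ← ENNReal.ofReal_mul (by positivity)]
  exact ENNReal.ofReal_le_ofReal (by linarith [sum_range_sub_le_integral h₁ h₂ h₂pos ⌊t⌋₊])

end Antitone

section ShotNoise

variable {Ω : Type*} [MeasurableSpace Ω] {P : Measure Ω} {ξ : ℕ → Ω → ℝ} {f₁ f₂ : ℝ → ℝ}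

theorem lintegral_tsum_shotNoise_le [IsProbabilityMeasure P] (hmeas : ∀ i, Measurable (ξ i))
    (hindep : iIndepFun ξ P) (hident : ∀ i, P.map (ξ i) = P.map (ξ 0))
    (hpos : ∀ i, ∀ᵐ ω ∂P, 0 < ξ i ω) (h₁ : AntitoneOn f₁ (Set.Ici 0))
    (h₂ : AntitoneOn f₂ (Set.Ici 0)) (t : ℝ) :
    ∫⁻ ω, ∑' k : ℕ,
        (if (∑ i ∈ Finset.range k, ξ i ω) ≤ t then
          ENNReal.ofReal (f₁ (t - ∑ i ∈ Finset.range k, ξ i ω) -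
            f₂ (t - ∑ i ∈ Finset.range k, ξ i ω)) else 0) ∂P ≤
      ENNReal.ofReal (exp 1) * (1 - ∫⁻ ω, ENNReal.ofReal (exp (-ξ 0 ω)) ∂P)⁻¹ *
        ∑ j ∈ Finset.range (⌊t⌋₊ + 1), ENNReal.ofReal (f₁ j - f₂ (j + 1)) := by
  set K := ENNReal.ofReal (exp 1) * (1 - ∫⁻ ω, ENNReal.ofReal (exp (-ξ 0 ω)) ∂P)⁻¹
  set n := ⌊t⌋₊
  set c : ℕ → ℝ≥0∞ := fun j => ENNReal.ofReal (f₁ j - f₂ (j + 1))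
  set D : ℕ → ℕ → Set Ω := fun j k =>
    {ω | ∑ i ∈ Finset.range k, ξ i ω ∈ Set.Ioc (t - j - 1) (t - j)}
  have hD : ∀ j k, MeasurableSet (D j k) := fun j k =>
    (Finset.measurable_sum _ fun i _ => hmeas i) measurableSet_Ioc
  have hpointwise : ∀ᵐ ω ∂P, ∀ k,
      (if (∑ i ∈ Finset.range k, ξ i ω) ≤ t then
        ENNReal.ofReal (f₁ (t - ∑ i ∈ Finset.range k, ξ i ω) -
          f₂ (t - ∑ i ∈ Finset.range k, ξ i ω)) else 0) ≤
        ∑ j ∈ Finset.range (n + 1), (D j k).indicator (fun _ => c j) ω := by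
    filter_upwards [ae_all_iff.2 hpos] with ω hω k
    split_ifs with hkt
    · exact ofReal_sub_le_sum_indicator h₁ h₂ (Finset.sum_nonneg fun i _ => (hω i).le) hkt
    · exact zero_le
  calc _ ≤ ∫⁻ ω, ∑' k, ∑ j ∈ Finset.range (n + 1), (D j k).indicator (fun _ => c j) ω ∂P :=
        lintegral_mono_ae (hpointwise.mono fun _ h => ENNReal.tsum_le_tsum h)
    _ = ∑' k, ∑ j ∈ Finset.range (n + 1), c j * P (D j k) := by
        rw [lintegral_tsum fun k => (Finset.measurable_sum _ fun j _ =>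
          measurable_const.indicator (hD j k)).aemeasurable]
        refine tsum_congr fun k => ?_
        rw [lintegral_finsetSum _ fun j _ => measurable_const.indicator (hD j k)]
        exact Finset.sum_congr rfl fun j _ => lintegral_indicator_const (hD j k) (c j)
    _ = ∑ j ∈ Finset.range (n + 1), c j * ∑' k, P (D j k) := by
        rw [Summable.tsum_finsetSum fun _ _ => ENNReal.summable]
        simp_rw [ENNReal.tsum_mul_left]
    _ ≤ ∑ j ∈ Finset.range (n + 1), c j * K := by
        gcongr with j
        exact tsum_measure_sum_range_mem_Ioc_le hmeas hindep hident (t - j)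
    _ = K * ∑ j ∈ Finset.range (n + 1), c j := by rw [← Finset.sum_mul, mul_comm]

end ShotNoise

theorem renewal_shot_noise_ratio_bounded_general
    {Ω : Type*} [MeasurableSpace Ω] (P : Measure Ω) [IsProbabilityMeasure P]
    (ξ : ℕ → Ω → ℝ) (hmeas : ∀ i, Measurable (ξ i))
    (hindep : ProbabilityTheory.iIndepFun ξ P)
    (hident : ∀ i, P.map (ξ i) = P.map (ξ 0))
    (hpos : ∀ i, ∀ᵐ ω ∂P, 0 < ξ i ω)
    (f₁ f₂ : ℝ → ℝ)
    (h₁ : AntitoneOn f₁ (Set.Ici 0)) (h₂ : AntitoneOn f₂ (Set.Ici 0))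
    (hle : ∀ y ≥ (0:ℝ), f₂ y ≤ f₁ y) (h₂pos : ∀ y ≥ (0:ℝ), 0 ≤ f₂ y)
    (t₀ : ℝ) (ht₀ : 0 < t₀)
    (hpos_int : 0 < ∫ y in (0:ℝ)..t₀, (f₁ y - f₂ y)) :
    ∃ C : ℝ≥0∞, C < ⊤ ∧ ∀ t ≥ t₀,
      (∫⁻ ω, ∑' k : ℕ,
          (if (∑ i ∈ Finset.range k, ξ i ω) ≤ t then
            ENNReal.ofReal (f₁ (t - ∑ i ∈ Finset.range k, ξ i ω) -
              f₂ (t - ∑ i ∈ Finset.range k, ξ i ω)) else 0) ∂P)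
        ≤ C * ENNReal.ofReal (∫ y in (0:ℝ)..t, (f₁ y - f₂ y)) := by
  set φ := ∫⁻ ω, ENNReal.ofReal (exp (-ξ 0 ω)) ∂P
  have hφ : (1 - φ)⁻¹ ≠ ⊤ :=
    ENNReal.inv_ne_top.2 (tsub_pos_of_lt (lintegral_exp_neg_lt_one (hpos 0))).ne'
  refine ⟨ENNReal.ofReal (exp 1) * (1 - φ)⁻¹ *
      ENNReal.ofReal ((f₁ 0 + f₂ 0) / (∫ y in (0:ℝ)..t₀, (f₁ y - f₂ y)) + 1),
    ENNReal.mul_lt_top (ENNReal.mul_lt_top ENNReal.ofReal_lt_top hφ.lt_top) ENNReal.ofReal_lt_top,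
    fun t ht => ?_⟩
  calc _ ≤ ENNReal.ofReal (exp 1) * (1 - φ)⁻¹ *
        ∑ j ∈ Finset.range (⌊t⌋₊ + 1), ENNReal.ofReal (f₁ j - f₂ (j + 1)) :=
        lintegral_tsum_shotNoise_le hmeas hindep hident hpos h₁ h₂ t
    _ ≤ _ := by
        rw [mul_assoc _ (ENNReal.ofReal _)]
        gcongr
        exact sum_ofReal_sub_le_mul_integral h₁ h₂ hle h₂pos ht₀.le hpos_int ht

/-- for a renewal process with i.i.d. strictly positive increments and
bounded decreasing `f₁ ≥ f₂ ≥ 0` with `∫₀^{t₀}(f₁−f₂) > 0`, the ratio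
`E ∫_{[0,t]}(f₁(t−y)−f₂(t−y)) dN(y) / ∫₀ᵗ(f₁−f₂)` is bounded over `t ≥ t₀`. -/
theorem renewal_shot_noise_ratio_bounded
    {Ω : Type*} [MeasurableSpace Ω] (P : Measure Ω) [IsProbabilityMeasure P]
    (ξ : ℕ → Ω → ℝ) (hmeas : ∀ i, Measurable (ξ i))
    (hindep : ProbabilityTheory.iIndepFun ξ P)
    (hident : ∀ i, P.map (ξ i) = P.map (ξ 0))
    (hpos : ∀ i, ∀ᵐ ω ∂P, 0 < ξ i ω)
    (f₁ f₂ : ℝ → ℝ)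
    (hbdd : ∃ M, ∀ y ≥ (0:ℝ), f₁ y ≤ M)
    (h₁ : AntitoneOn f₁ (Set.Ici 0)) (h₂ : AntitoneOn f₂ (Set.Ici 0))
    (hle : ∀ y ≥ (0:ℝ), f₂ y ≤ f₁ y) (h₂pos : ∀ y ≥ (0:ℝ), 0 ≤ f₂ y)
    (t₀ : ℝ) (ht₀ : 0 < t₀)
    (hpos_int : 0 < ∫ y in (0:ℝ)..t₀, (f₁ y - f₂ y)) :
    ∃ C : ℝ≥0∞, C < ⊤ ∧ ∀ t ≥ t₀,
      (∫⁻ ω, ∑' k : ℕ,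
          (if (∑ i ∈ Finset.range k, ξ i ω) ≤ t then
            ENNReal.ofReal (f₁ (t - ∑ i ∈ Finset.range k, ξ i ω) -
              f₂ (t - ∑ i ∈ Finset.range k, ξ i ω)) else 0) ∂P)
        ≤ C * ENNReal.ofReal (∫ y in (0:ℝ)..t, (f₁ y - f₂ y)) :=
  renewal_shot_noise_ratio_bounded_general P ξ hmeas hindep hident hpos f₁ f₂ h₁ h₂ hle h₂pos t₀ ht₀
    hpos_int
end

section
/- With h bounded, right-continuous and decreasing on [0,∞) and h*(t) = e^{−t}(h(0) + ∫₀^t h(y)e^y dy) its exponential smoothing, one has h*(t) ≥ h(t) for all t, and lim_{t→∞} ∫₀^t (h*(y) − h(y)) dy = h(0), provided that ∫₀^t h(y)dy e^{−t} → 0 and E[θ h(t−θ) 1{θ ≤ t}] → 0 as t → ∞, for θ standard exponential. -/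
open Filter Real MeasureTheory intervalIntegral Set

/-- for `h` bounded, right-continuous, decreasing on `[0,∞)` with
`h(t) → 0`, the exponential smoothing `h*(t) = e^{−t}(h(0) + ∫₀ᵗ h(y)e^y dy)` satisfies
`h* ≥ h` and `∫₀ᵗ (h*(y) − h(y)) dy → h(0)` as `t → ∞`, provided
`e^{−t}∫₀ᵗ h → 0` and `E[θ h(t−θ) 1_{θ≤t}] → 0` for `θ` standard exponential. -/
theorem exponential_smoothing_integral_difference
    (h : ℝ → ℝ)
    (hnonneg : ∀ t, 0 ≤ h t)
    (hbdd : ∃ M : ℝ, ∀ t, h t ≤ M)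
    (hdec : AntitoneOn h (Set.Ici 0))
    (hrc : ∀ x ≥ (0:ℝ), ContinuousWithinAt h (Set.Ici x) x)
    (hlim : Tendsto h atTop (nhds 0))
    (haux1 : Tendsto (fun t => Real.exp (-t) * ∫ y in (0:ℝ)..t, h y) atTop (nhds 0))
    (haux2 : Tendsto (fun t => ∫ s in (0:ℝ)..t, s * Real.exp (-s) * h (t - s))
      atTop (nhds 0)) :
    (∀ t ≥ (0:ℝ),
      h t ≤ Real.exp (-t) * (h 0 + ∫ y in (0:ℝ)..t, h y * Real.exp y)) ∧
    Tendsto (fun t => ∫ y in (0:ℝ)..t,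
        (Real.exp (-y) * (h 0 + ∫ x in (0:ℝ)..y, h x * Real.exp x) - h y))
      atTop (nhds (h 0)) := by
  obtain ⟨M, hM⟩ := hbdd
  have hM0 : (0:ℝ) ≤ M := (hnonneg 0).trans (hM 0)
  -- measurability of the integrand on `[0,∞)`
  have hmeash : AEMeasurable h (volume.restrict (Set.Ici (0:ℝ))) :=
    aemeasurable_restrict_of_antitoneOn measurableSet_Ici hdec
  -- interval integrability of `h`
  have hIntH : ∀ {a b : ℝ}, 0 ≤ a → a ≤ b → IntervalIntegrable h volume a b := by
    intro a b ha hab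
    refine AntitoneOn.intervalIntegrable (hdec.mono ?_)
    rw [Set.uIcc_of_le hab]
    exact fun x hx => le_trans ha hx.1
  -- interval integrability of `h y * exp y`
  have hIntG : ∀ {a b : ℝ}, 0 ≤ a → a ≤ b →
      IntervalIntegrable (fun y => h y * Real.exp y) volume a b :=
    fun ha hab => (hIntH ha hab).mul_continuousOn Real.continuous_exp.continuousOn
  -- Part 1
  have part1 : ∀ t ≥ (0:ℝ),
      h t ≤ Real.exp (-t) * (h 0 + ∫ y in (0:ℝ)..t, h y * Real.exp y) := by
    intro t ht
    have h1 : ∫ y in (0:ℝ)..t, h t * Real.exp y ≤ ∫ y in (0:ℝ)..t, h y * Real.exp y := by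
      refine intervalIntegral.integral_mono_on ht
        (intervalIntegrable_const.mul_continuousOn Real.continuous_exp.continuousOn)
        (hIntG le_rfl ht) (fun y hy => ?_)
      exact mul_le_mul_of_nonneg_right
        (hdec (Set.mem_Ici.mpr hy.1) (Set.mem_Ici.mpr ht) hy.2) (Real.exp_pos y).le
    have h2 : ∫ y in (0:ℝ)..t, h t * Real.exp y = h t * (Real.exp t - 1) := by
      rw [intervalIntegral.integral_const_mul, integral_exp, Real.exp_zero]
    rw [h2] at h1
    have h3 : h t ≤ h 0 := hdec (Set.mem_Ici.mpr le_rfl) (Set.mem_Ici.mpr ht) ht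
    have h4 : h t * Real.exp t ≤ h 0 + ∫ y in (0:ℝ)..t, h y * Real.exp y := by nlinarith
    have h5 : h t = Real.exp (-t) * (h t * Real.exp t) := by
      rw [Real.exp_neg]
      field_simp
    rw [h5]
    exact mul_le_mul_of_nonneg_left h4 (Real.exp_pos (-t)).le
  refine ⟨part1, ?_⟩
  -- notation
  set P : ℝ → ℝ := fun y => ∫ x in (0:ℝ)..y, h x * Real.exp x with hP
  set hst : ℝ → ℝ := fun y => Real.exp (-y) * (h 0 + P y) with hhst
  have hst0 : hst 0 = h 0 := by
    simp [hhst, hP, intervalIntegral.integral_same]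
  -- continuity of hst on [0,t]
  have hstCont : ∀ t ≥ (0:ℝ), ContinuousOn hst (Set.Icc 0 t) := by
    intro t ht
    have hPcont : ContinuousOn P (Set.Icc 0 t) := by
      have := intervalIntegral.continuousOn_primitive_interval
        (f := fun y => h y * Real.exp y) (μ := volume) (a := (0:ℝ)) (b := t)
        (by
          rw [Set.uIcc_of_le ht]
          exact (intervalIntegrable_iff_integrableOn_Icc_of_le ht).1 (hIntG le_rfl ht))
      rwa [Set.uIcc_of_le ht] at this
    exact ((Real.continuous_exp.comp continuous_neg).continuousOn).mul
      (continuousOn_const.add hPcont)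
  -- key identity
  have key : ∀ t ≥ (0:ℝ), (∫ y in (0:ℝ)..t, (hst y - h y)) = h 0 - hst t := by
    intro t ht
    have hcont : ContinuousOn (fun y => -(hst y)) (Set.Icc 0 t) := (hstCont t ht).neg
    have hderiv : ∀ x ∈ Set.Ioo (0:ℝ) t,
        HasDerivWithinAt (fun y => -(hst y)) (hst x - h x) (Set.Ioi x) x := by
      intro x hx
      have hx0 : (0:ℝ) ≤ x := hx.1.le
      have hmeasG : StronglyMeasurableAtFilter (fun y => h y * Real.exp y)
          (nhdsWithin x (Set.Ioi x)) volume := by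
        refine ⟨Set.Ici 0, mem_of_superset self_mem_nhdsWithin ?_, ?_⟩
        · exact fun y hy => le_trans hx0 (le_of_lt hy)
        · exact (hmeash.mul Real.measurable_exp.aemeasurable).aestronglyMeasurable
      have hcontG : ContinuousWithinAt (fun y => h y * Real.exp y) (Set.Ioi x) x :=
        (((hrc x hx0).mul Real.continuous_exp.continuousWithinAt).mono Set.Ioi_subset_Ici_self)
      have hd1 : HasDerivWithinAt P (h x * Real.exp x) (Set.Ici x) x :=
        intervalIntegral.integral_hasDerivWithinAt_right (hIntG le_rfl hx0) hmeasG hcontG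
      have hd2 : HasDerivWithinAt (fun y => Real.exp (-y)) (-Real.exp (-x)) (Set.Ici x) x := by
        have : HasDerivAt (fun y => Real.exp (-y)) (Real.exp (-x) * (-1)) x :=
          (Real.hasDerivAt_exp (-x)).comp x ((hasDerivAt_id x).neg)
        simpa using this.hasDerivWithinAt
      have hd3 : HasDerivWithinAt hst
          ((-Real.exp (-x)) * (h 0 + P x) + Real.exp (-x) * (h x * Real.exp x))
          (Set.Ici x) x := by
        have := hd2.mul ((hasDerivWithinAt_const x (Set.Ici x) (h 0)).add hd1)
        rwa [zero_add] at this
      have hval : -((-Real.exp (-x)) * (h 0 + P x) + Real.exp (-x) * (h x * Real.exp x))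
          = hst x - h x := by
        have hee : Real.exp (-x) * Real.exp x = 1 := by
          rw [← Real.exp_add]; simp
        simp only [hhst]
        linear_combination (-(h x)) * hee
      have := hd3.neg
      rw [hval] at this
      exact this.mono Set.Ioi_subset_Ici_self
    have hint : IntervalIntegrable (fun y => hst y - h y) volume 0 t := by
      refine IntervalIntegrable.sub ?_ (hIntH le_rfl ht)
      refine ContinuousOn.intervalIntegrable ?_
      rw [Set.uIcc_of_le ht]
      exact hstCont t ht
    have := intervalIntegral.integral_eq_sub_of_hasDeriv_right_of_le ht hcont hderiv hint
    rw [this, hst0]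
    ring
  -- hst → 0
  have hPnn : ∀ t ≥ (0:ℝ), 0 ≤ P t := by
    intro t ht
    exact intervalIntegral.integral_nonneg ht
      (fun x _ => mul_nonneg (hnonneg x) (Real.exp_pos x).le)
  have hbound : ∀ t ≥ (0:ℝ),
      Real.exp (-t) * P t ≤ M * Real.exp (-(t/2)) + h (t/2) := by
    intro t ht
    have h2 : (0:ℝ) ≤ t/2 := by linarith
    have h2' : t/2 ≤ t := by linarith
    have hsplit : P t = P (t/2) + ∫ x in (t/2)..t, h x * Real.exp x := by
      rw [hP]
      exact (intervalIntegral.integral_add_adjacent_intervals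
        (hIntG le_rfl h2) (hIntG h2 h2')).symm
    have hb1 : P (t/2) ≤ M * Real.exp (t/2) := by
      have : P (t/2) ≤ ∫ x in (0:ℝ)..(t/2), M * Real.exp x := by
        refine intervalIntegral.integral_mono_on h2 (hIntG le_rfl h2)
          (intervalIntegrable_const.mul_continuousOn Real.continuous_exp.continuousOn)
          (fun x hx => mul_le_mul_of_nonneg_right (hM x) (Real.exp_pos x).le)
      rw [intervalIntegral.integral_const_mul, integral_exp, Real.exp_zero] at this
      nlinarith [Real.exp_pos (t/2)]
    have hb2 : (∫ x in (t/2)..t, h x * Real.exp x) ≤ h (t/2) * Real.exp t := by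
      have : (∫ x in (t/2)..t, h x * Real.exp x) ≤ ∫ x in (t/2)..t, h (t/2) * Real.exp x := by
        refine intervalIntegral.integral_mono_on h2' (hIntG h2 h2')
          (intervalIntegrable_const.mul_continuousOn Real.continuous_exp.continuousOn)
          (fun x hx => mul_le_mul_of_nonneg_right
            (hdec (Set.mem_Ici.mpr h2) (Set.mem_Ici.mpr (le_trans h2 hx.1)) hx.1)
            (Real.exp_pos x).le)
      rw [intervalIntegral.integral_const_mul, integral_exp] at this
      nlinarith [Real.exp_pos (t/2), hnonneg (t/2)]
    have he1 : Real.exp (-t) * Real.exp (t/2) = Real.exp (-(t/2)) := by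
      rw [← Real.exp_add]; ring_nf
    have he2 : Real.exp (-t) * Real.exp t = 1 := by
      rw [← Real.exp_add]; simp
    have := add_le_add hb1 hb2
    rw [← hsplit] at this
    calc Real.exp (-t) * P t
        ≤ Real.exp (-t) * (M * Real.exp (t/2) + h (t/2) * Real.exp t) :=
          mul_le_mul_of_nonneg_left this (Real.exp_pos (-t)).le
      _ = M * (Real.exp (-t) * Real.exp (t/2)) + h (t/2) * (Real.exp (-t) * Real.exp t) := by
          ring
      _ = M * Real.exp (-(t/2)) + h (t/2) := by rw [he1, he2]; ring
  have hhalf : Tendsto (fun t : ℝ => h (t/2)) atTop (nhds 0) :=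
    hlim.comp (tendsto_id.atTop_div_const two_pos)
  have hexp2 : Tendsto (fun t : ℝ => M * Real.exp (-(t/2))) atTop (nhds 0) := by
    have : Tendsto (fun t : ℝ => Real.exp (-(t/2))) atTop (nhds 0) :=
      Real.tendsto_exp_neg_atTop_nhds_zero.comp (tendsto_id.atTop_div_const two_pos)
    simpa using this.const_mul M
  have hEP : Tendsto (fun t : ℝ => Real.exp (-t) * P t) atTop (nhds 0) := by
    refine squeeze_zero' ?_ ?_ (by simpa using hexp2.add hhalf)
    · filter_upwards [eventually_ge_atTop (0:ℝ)] with t ht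
      exact mul_nonneg (Real.exp_pos (-t)).le (hPnn t ht)
    · filter_upwards [eventually_ge_atTop (0:ℝ)] with t ht
      exact hbound t ht
  have hstlim : Tendsto hst atTop (nhds 0) := by
    have h1 : Tendsto (fun t : ℝ => Real.exp (-t) * h 0) atTop (nhds 0) := by
      simpa using Real.tendsto_exp_neg_atTop_nhds_zero.mul_const (h 0)
    have := h1.add hEP
    rw [add_zero] at this
    refine this.congr (fun t => ?_)
    simp [hhst]
    ring
  have final : Tendsto (fun t => h 0 - hst t) atTop (nhds (h 0)) := by
    simpa using hstlim.const_sub (h 0)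
  refine final.congr' ?_
  filter_upwards [eventually_ge_atTop (0:ℝ)] with t ht
  exact (key t ht).symm
end
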